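/- Let N = (G, c) be a flow network, A1, A2 ⊆ Ein with A1 ∩ A2 = ∅, and B ⊆ Eout. Consider all pairs of functions f, f′ : E → ℝ≥0 such that f + f′ is a feasible flow, f′(A2) = f′(B) = maxFromTo_N(A2, B), and (f + f′)(e) = 0 for every e ∈ (Ein \ (A1 ∪ A2)) ∪ (Eout \ B). Then the supremum of f(A1) over all such pairs equals the supremum of f(B) over all such pairs; that is, definitions (3) and (4) of maxFromToAft_N(A1, B | A2, B) agree. -/

import Mathlib

/-!
Write `g = f + f'`. By conservation `g(A1) + g(A2) = g(B) = f(B) + maxFromTo(A2, B)`. A feasible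
flow into `B` carries at most `maxFromTo(A2, B)` through `A2` (a maximal subflow entering only
through `A2` admits no augmenting path), and `f'` alone already does, so `g(A2) = maxFromTo(A2, B)`
and `g(A1) = f(B)`. Hence `f(A1) ≤ f(B)`; conversely, moving the part of `f'` on `A1` into `f`
gives an admissible pair whose value on `A1` is `f(B)`.
-/

open Finset

/-- A flow network: a finite vertex set `V`, a finite edge set `E` partitioned into
input edges `Ein`, output edges `Eout` and internal edges `Eint`; each internal edge
has two distinct endpoints `tail e` and `head e` (with at most one internal edge per
`(tail, head)` pair), each input edge has a head only, each output edge a tail only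
(values of `tail`/`head` outside their intended domains are irrelevant junk); and a
nonnegative upper-bound capacity `cap`. -/
structure FlowNetwork (V E : Type) [Fintype V] [Fintype E]
    [DecidableEq V] [DecidableEq E] where
  Ein : Finset E
  Eout : Finset E
  Eint : Finset E
  cover : Ein ∪ Eout ∪ Eint = Finset.univ
  disj_in_out : Disjoint Ein Eout
  disj_in_int : Disjoint Ein Eint
  disj_out_int : Disjoint Eout Eint
  tail : E → V
  head : E → V
  no_self_loop : ∀ e ∈ Eint, tail e ≠ head e
  no_multi : ∀ e ∈ Eint, ∀ e' ∈ Eint, tail e = tail e' → head e = head e' → e = e'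
  cap : E → ℝ
  cap_nonneg : ∀ e, 0 ≤ cap e

namespace FlowNetwork

variable {V E : Type} [Fintype V] [Fintype E] [DecidableEq V] [DecidableEq E]

/-- A flow `f : E → ℝ≥0` is feasible if it conserves flow at every vertex and
respects the capacity of every edge. -/
def Feasible (N : FlowNetwork V E) (f : E → ℝ) : Prop :=
  (∀ e, 0 ≤ f e) ∧ (∀ e, f e ≤ N.cap e) ∧
  ∀ v : V,
    ∑ e ∈ (N.Ein ∪ N.Eint).filter (fun e => N.head e = v), f e =
    ∑ e ∈ (N.Eout ∪ N.Eint).filter (fun e => N.tail e = v), f e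

/-- `maxFromTo N A B`: the supremum of `f(A)` over all feasible flows `f` that
vanish on `(Ein \ A) ∪ (Eout \ B)`. -/
noncomputable def maxFromTo (N : FlowNetwork V E) (A B : Finset E) : ℝ :=
  sSup {x : ℝ | ∃ f : E → ℝ, N.Feasible f ∧
    (∀ e ∈ (N.Ein \ A) ∪ (N.Eout \ B), f e = 0) ∧ x = ∑ e ∈ A, f e}

end FlowNetwork

lemma exists_pos_mul_le {ι : Type*} [Finite ι] {ψ d : ι → ℝ} (hd : 0 ≤ d)
    (hψd : ∀ i, ψ i ≠ 0 → 0 < d i) : ∃ ε > 0, ∀ i, ε * ψ i ≤ d i := by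
  have h : ∀ i, ∀ᶠ ε in nhdsWithin (0 : ℝ) (Set.Ioi 0), ε * ψ i ≤ d i := by
    intro i
    by_cases hψ : ψ i = 0
    · exact .of_forall fun _ => by simpa [hψ] using hd i
    · have hlim : Filter.Tendsto (fun ε : ℝ => ε * ψ i) (nhdsWithin 0 (Set.Ioi 0)) (nhds 0) :=
        ((continuous_mul_const (ψ i)).tendsto' 0 0 (zero_mul _)).mono_left nhdsWithin_le_nhds
      exact (hlim.eventually (gt_mem_nhds (hψd i hψ))).mono fun _ => le_of_lt
  exact ((Filter.eventually_all.2 h).and self_mem_nhdsWithin).exists.imp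
    fun ε hε => ⟨hε.2, hε.1⟩

namespace FlowNetwork

variable {V E : Type} [Fintype V] [Fintype E] [DecidableEq V] [DecidableEq E]

def excess (N : FlowNetwork V E) : (E → ℝ) →ₗ[ℝ] V → ℝ where
  toFun f v := ∑ e ∈ (N.Ein ∪ N.Eint).filter (fun e => N.head e = v), f e -
    ∑ e ∈ (N.Eout ∪ N.Eint).filter (fun e => N.tail e = v), f e
  map_add' f g := by
    ext v
    simp only [Pi.add_apply, sum_add_distrib]
    ring
  map_smul' c f := by
    ext v
    simp only [Pi.smul_apply, smul_eq_mul, RingHom.id_apply, ← mul_sum, mul_sub]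

variable {N : FlowNetwork V E}

lemma feasible_iff {f : E → ℝ} : N.Feasible f ↔ 0 ≤ f ∧ f ≤ N.cap ∧ N.excess f = 0 := by
  simp only [Feasible, funext_iff, excess, LinearMap.coe_mk, AddHom.coe_mk, Pi.zero_apply,
    sub_eq_zero, Pi.le_def]

lemma excess_single_apply (a : E) (v : V) :
    N.excess (Pi.single a 1) v =
      (if a ∈ N.Ein ∪ N.Eint ∧ N.head a = v then 1 else 0) -
        (if a ∈ N.Eout ∪ N.Eint ∧ N.tail a = v then 1 else 0) := by
  simp [excess, sum_pi_single']

lemma excess_single_of_mem_Ein {a : E} (ha : a ∈ N.Ein) :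
    N.excess (Pi.single a 1) = Pi.single (N.head a) 1 := by
  ext v
  have hout := disjoint_left.mp N.disj_in_out ha
  have hint := disjoint_left.mp N.disj_in_int ha
  simp [excess_single_apply, ha, hout, hint, Pi.single_apply, eq_comm]

lemma excess_single_of_mem_Eout {b : E} (hb : b ∈ N.Eout) :
    N.excess (Pi.single b 1) = -Pi.single (N.tail b) 1 := by
  ext v
  have hin := disjoint_right.mp N.disj_in_out hb
  have hint := disjoint_left.mp N.disj_out_int hb
  simp [excess_single_apply, hb, hin, hint, Pi.single_apply, eq_comm]

lemma excess_single_of_mem_Eint {e : E} (he : e ∈ N.Eint) :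
    N.excess (Pi.single e 1) = Pi.single (N.head e) 1 - Pi.single (N.tail e) 1 := by
  ext v
  simp [excess_single_apply, he, Pi.single_apply, eq_comm]

lemma sum_Ein_eq_sum_Eout {f : E → ℝ} (hf : N.excess f = 0) :
    ∑ e ∈ N.Ein, f e = ∑ e ∈ N.Eout, f e := by
  have hsum : ∑ v, N.excess f v = 0 := by simp [hf]
  simp only [excess, LinearMap.coe_mk, AddHom.coe_mk, sum_sub_distrib, sum_fiberwise,
    sum_union N.disj_in_int, sum_union N.disj_out_int] at hsum
  linarith

lemma sum_eq_sum_of_eq_zero {f : E → ℝ} {A B : Finset E} (hA : A ⊆ N.Ein) (hB : B ⊆ N.Eout)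
    (hf : N.excess f = 0) (hZ : ∀ e ∈ (N.Ein \ A) ∪ (N.Eout \ B), f e = 0) :
    ∑ e ∈ A, f e = ∑ e ∈ B, f e := by
  rw [sum_subset hA fun e he heA => hZ e (mem_union_left _ (mem_sdiff.2 ⟨he, heA⟩)),
    sum_subset hB fun e he heB => hZ e (mem_union_right _ (mem_sdiff.2 ⟨he, heB⟩))]
  exact sum_Ein_eq_sum_Eout hf

def SupportAdj (N : FlowNetwork V E) (d : E → ℝ) (u v : V) : Prop :=
  ∃ e ∈ N.Eint, 0 < d e ∧ N.tail e = u ∧ N.head e = v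

lemma exists_walk_flow {d : E → ℝ} {u v : V} (huv : Relation.ReflTransGen (N.SupportAdj d) u v) :
    ∃ θ : E → ℝ, 0 ≤ θ ∧ (∀ e, θ e ≠ 0 → e ∈ N.Eint ∧ 0 < d e) ∧
      N.excess θ = Pi.single v 1 - Pi.single u 1 := by
  induction huv with
  | refl => exact ⟨0, le_rfl, fun e he => absurd rfl he, by simp⟩
  | tail _ hstep ih =>
    obtain ⟨θ, hθ0, hθd, hθ⟩ := ih
    obtain ⟨e₀, he₀, hde₀, rfl, rfl⟩ := hstep
    refine ⟨θ + Pi.single e₀ 1, add_nonneg hθ0 (Pi.single_nonneg.2 zero_le_one), ?_, ?_⟩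
    · intro e he
      by_cases h : e = e₀
      · exact h ▸ ⟨he₀, hde₀⟩
      · simp only [Pi.add_apply, Pi.single_eq_of_ne h, add_zero] at he
        exact hθd e he
    · rw [map_add, hθ, excess_single_of_mem_Eint he₀]
      abel

/-- Otherwise the set of vertices reachable from `head a` would receive flow without
emitting any. -/
lemma exists_reachable_Eout {d : E → ℝ} (hd0 : 0 ≤ d) (hd : N.excess d = 0) {a : E}
    (ha : a ∈ N.Ein) (hda : 0 < d a) :
    ∃ b ∈ N.Eout, 0 < d b ∧ Relation.ReflTransGen (N.SupportAdj d) (N.head a) (N.tail b) := by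
  classical
  by_contra! hcon
  set P : Finset V := univ.filter (Relation.ReflTransGen (N.SupportAdj d) (N.head a))
  have hclosed : ∀ e ∈ N.Eint, N.tail e ∈ P → 0 < d e → N.head e ∈ P := by
    intro e he ht hde
    simp only [P, mem_filter, mem_univ, true_and] at ht ⊢
    exact ht.tail ⟨e, he, hde, rfl, rfl⟩
  have hsum : ∑ v ∈ P, N.excess d v = 0 := by simp [hd]
  simp only [excess, LinearMap.coe_mk, AddHom.coe_mk, sum_sub_distrib,
    sum_fiberwise_eq_sum_filter] at hsum
  simp only [filter_union, sum_union (disjoint_filter_filter N.disj_in_int),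
    sum_union (disjoint_filter_filter N.disj_out_int)] at hsum
  have hin : d a ≤ ∑ e ∈ N.Ein with N.head e ∈ P, d e :=
    single_le_sum (fun e _ => hd0 e) (mem_filter.2 ⟨ha, by simpa [P] using .refl⟩)
  have hout : ∑ e ∈ N.Eout with N.tail e ∈ P, d e = 0 := by
    refine sum_eq_zero fun e he => ?_
    simp only [P, mem_filter, mem_univ, true_and] at he
    exact le_antisymm (not_lt.1 fun hde => hcon e he.1 hde he.2) (hd0 e)
  have hint : ∑ e ∈ N.Eint with N.tail e ∈ P, d e ≤ ∑ e ∈ N.Eint with N.head e ∈ P, d e := by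
    calc ∑ e ∈ N.Eint with N.tail e ∈ P, d e
        ≤ ∑ e ∈ N.Eint with N.tail e ∈ P, (if N.head e ∈ P then d e else 0) := by
          refine sum_le_sum fun e he => ?_
          rw [mem_filter] at he
          split_ifs with hh
          · exact le_rfl
          · exact not_lt.1 fun hde => hh (hclosed e he.1 he.2 hde)
      _ ≤ ∑ e ∈ N.Eint with N.head e ∈ P, d e := by
          rw [← sum_filter, filter_filter]
          exact sum_le_sum_of_subset_of_nonneg (monotone_filter_right _ fun _ _ h => h.2)
            fun e _ _ => hd0 e
  linarith

lemma exists_augmenting_flow {d : E → ℝ} (hd0 : 0 ≤ d) (hd : N.excess d = 0) {a : E}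
    (ha : a ∈ N.Ein) (hda : 0 < d a) :
    ∃ ψ : E → ℝ, 0 ≤ ψ ∧ N.excess ψ = 0 ∧ ψ a = 1 ∧ (∀ e ∈ N.Ein, e ≠ a → ψ e = 0) ∧
      ∀ e, ψ e ≠ 0 → 0 < d e := by
  obtain ⟨b, hb, hdb, hab⟩ := exists_reachable_Eout hd0 hd ha hda
  obtain ⟨θ, hθ0, hθd, hθ⟩ := exists_walk_flow hab
  have hθEin : ∀ e ∈ N.Ein, θ e = 0 := fun e he =>
    not_not.1 fun h => disjoint_left.mp N.disj_in_int he (hθd e h).1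
  have hne : ∀ e ∈ N.Ein, e ≠ b := fun e he h => disjoint_left.mp N.disj_in_out he (h ▸ hb)
  refine ⟨Pi.single a 1 + θ + Pi.single b 1, ?_, ?_, ?_, ?_, ?_⟩
  · exact add_nonneg (add_nonneg (Pi.single_nonneg.2 zero_le_one) hθ0)
      (Pi.single_nonneg.2 zero_le_one)
  · rw [map_add, map_add, hθ, excess_single_of_mem_Ein ha, excess_single_of_mem_Eout hb]
    abel
  · simp [hθEin a ha, Pi.single_eq_of_ne (hne a ha)]
  · intro e he hea
    simp [hθEin e he, Pi.single_eq_of_ne hea, Pi.single_eq_of_ne (hne e he)]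
  · intro e he
    by_cases hea : e = a
    · exact hea ▸ hda
    by_cases heb : e = b
    · exact heb ▸ hdb
    simp only [Pi.add_apply, Pi.single_eq_of_ne hea, Pi.single_eq_of_ne heb, zero_add,
      add_zero] at he
    exact (hθd e he).2

lemma feasible_zero : N.Feasible 0 :=
  feasible_iff.2 ⟨le_rfl, N.cap_nonneg, map_zero _⟩

lemma isCompact_setOf_feasible (Z : Finset E) :
    IsCompact {f | N.Feasible f ∧ ∀ e ∈ Z, f e = 0} := by
  refine (isCompact_Icc (a := 0) (b := N.cap)).of_isClosed_subset ?_
    fun f hf => ⟨(feasible_iff.1 hf.1).1, (feasible_iff.1 hf.1).2.1⟩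
  simp only [feasible_iff, Set.ofPred_and, Set.ofPred_forall]
  exact (isClosed_Ici.inter (isClosed_Iic.inter
    (isClosed_eq N.excess.continuous_of_finiteDimensional continuous_const))).inter
    (isClosed_biInter fun e _ => isClosed_eq (continuous_apply e) continuous_const)

lemma exists_isGreatest_maxFromTo (A B : Finset E) :
    ∃ f, N.Feasible f ∧ (∀ e ∈ (N.Ein \ A) ∪ (N.Eout \ B), f e = 0) ∧
      IsGreatest {x : ℝ | ∃ f : E → ℝ, N.Feasible f ∧
        (∀ e ∈ (N.Ein \ A) ∪ (N.Eout \ B), f e = 0) ∧ x = ∑ e ∈ A, f e} (∑ e ∈ A, f e) := by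
  obtain ⟨f, hf, hmax⟩ := (N.isCompact_setOf_feasible _).exists_isMaxOn
    ⟨0, feasible_zero, fun _ _ => rfl⟩ (continuous_finsetSum A fun e _ => continuous_apply e).continuousOn
  refine ⟨f, hf.1, hf.2, ⟨f, hf.1, hf.2, rfl⟩, ?_⟩
  rintro _ ⟨g, hg, hgZ, rfl⟩
  exact hmax ⟨hg, hgZ⟩

lemma exists_sum_eq_maxFromTo (A B : Finset E) :
    ∃ f, N.Feasible f ∧ (∀ e ∈ (N.Ein \ A) ∪ (N.Eout \ B), f e = 0) ∧
      ∑ e ∈ A, f e = N.maxFromTo A B := by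
  obtain ⟨f, hf, hfZ, hgreat⟩ := N.exists_isGreatest_maxFromTo A B
  exact ⟨f, hf, hfZ, hgreat.csSup_eq.symm⟩

lemma sum_le_maxFromTo_of_eq_zero {A B : Finset E} {f : E → ℝ} (hf : N.Feasible f)
    (hfZ : ∀ e ∈ (N.Ein \ A) ∪ (N.Eout \ B), f e = 0) : ∑ e ∈ A, f e ≤ N.maxFromTo A B := by
  obtain ⟨_, -, -, hgreat⟩ := N.exists_isGreatest_maxFromTo A B
  rw [maxFromTo, hgreat.csSup_eq]
  exact hgreat.2 ⟨f, hf, hfZ, rfl⟩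

def withCap (N : FlowNetwork V E) (u : E → ℝ) (hu : 0 ≤ u) : FlowNetwork V E :=
  { N with cap := u, cap_nonneg := hu }

lemma withCap_feasible_iff {u f : E → ℝ} (hu : 0 ≤ u) :
    (N.withCap u hu).Feasible f ↔ 0 ≤ f ∧ f ≤ u ∧ N.excess f = 0 :=
  feasible_iff

/-- Take a maximum flow `h` from `A` to `B` under the capacities `g`; if it were short of `g`
on `A`, it could be increased along an augmenting path of `g - h`. -/
theorem sum_le_maxFromTo {A B : Finset E} {g : E → ℝ} (hA : A ⊆ N.Ein) (hg : N.Feasible g)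
    (hgB : ∀ e ∈ N.Eout \ B, g e = 0) : ∑ e ∈ A, g e ≤ N.maxFromTo A B := by
  obtain ⟨hg0, hgcap, hgx⟩ := feasible_iff.1 hg
  set N' := N.withCap g hg0
  obtain ⟨h, hh, hhZ, hhmax⟩ := N'.exists_sum_eq_maxFromTo A B
  obtain ⟨hh0, hhg, hhx⟩ := (withCap_feasible_iff hg0).1 hh
  have hhN : N.Feasible h := feasible_iff.2 ⟨hh0, hhg.trans hgcap, hhx⟩
  refine le_trans ?_ (sum_le_maxFromTo_of_eq_zero hhN hhZ)
  by_contra! hlt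
  obtain ⟨a, haA, hha⟩ := exists_lt_of_sum_lt hlt
  obtain ⟨ψ, hψ0, hψx, hψa, hψEin, hψd⟩ := exists_augmenting_flow (d := g - h)
    (sub_nonneg.2 hhg) (by rw [map_sub, hgx, hhx, sub_zero]) (hA haA) (sub_pos.2 hha)
  obtain ⟨ε, hε, hεψ⟩ := exists_pos_mul_le (sub_nonneg.2 hhg) hψd
  have hbetter : N'.Feasible (h + ε • ψ) := by
    refine (withCap_feasible_iff hg0).2 ⟨add_nonneg hh0 (smul_nonneg hε.le hψ0), fun e => ?_, ?_⟩
    · have := hεψ e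
      simp only [Pi.add_apply, Pi.smul_apply, smul_eq_mul, Pi.sub_apply] at this ⊢
      linarith
    · rw [map_add, map_smul, hhx, hψx, smul_zero, add_zero]
  have hbetterZ : ∀ e ∈ (N.Ein \ A) ∪ (N.Eout \ B), (h + ε • ψ) e = 0 := by
    intro e he
    rcases mem_union.1 he with he' | he'
    · have hea : e ≠ a := fun hae => (mem_sdiff.1 he').2 (hae ▸ haA)
      simp [hhZ e he, hψEin e (mem_sdiff.1 he').1 hea]
    · obtain ⟨hb0, hbg, -⟩ := (withCap_feasible_iff hg0).1 hbetter
      exact le_antisymm ((hbg e).trans_eq (hgB e he')) (hb0 e)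
  have hψA : 1 ≤ ∑ e ∈ A, ψ e := hψa ▸ single_le_sum (fun e _ => hψ0 e) haA
  have hgain := sum_le_maxFromTo_of_eq_zero hbetter hbetterZ
  simp only [Pi.add_apply, Pi.smul_apply, smul_eq_mul, sum_add_distrib, ← mul_sum] at hgain
  nlinarith

/-- The pairs over which the two suprema of `maxFromToAft N (A1, B | A2, B)` are taken:
`f'` is a maximum flow from `A2` to `B` and `f` is routed on top of it. -/
def IsAftPair (N : FlowNetwork V E) (A1 A2 B : Finset E) (f f' : E → ℝ) : Prop :=
  (∀ e, 0 ≤ f e) ∧ (∀ e, 0 ≤ f' e) ∧ N.Feasible (f + f') ∧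
    ∑ e ∈ A2, f' e = N.maxFromTo A2 B ∧ ∑ e ∈ B, f' e = N.maxFromTo A2 B ∧
    (∀ e ∈ (N.Ein \ (A1 ∪ A2)) ∪ (N.Eout \ B), f e + f' e = 0)

section IsAftPair

variable {A1 A2 B : Finset E} {f f' : E → ℝ}

lemma exists_isAftPair_zero (hA2 : A2 ⊆ N.Ein) (hB : B ⊆ N.Eout) :
    ∃ f', N.IsAftPair A1 A2 B 0 f' := by
  obtain ⟨f', hf', hf'Z, hf'M⟩ := N.exists_sum_eq_maxFromTo A2 B
  refine ⟨f', fun _ => le_rfl, (feasible_iff.1 hf').1, by rwa [zero_add], hf'M, ?_, ?_⟩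
  · rw [← hf'M]
    exact (sum_eq_sum_of_eq_zero hA2 hB (feasible_iff.1 hf').2.2 hf'Z).symm
  · intro e he
    rw [Pi.zero_apply, zero_add]
    refine hf'Z e (union_subset_union (sdiff_subset_sdiff subset_rfl ?_) subset_rfl he)
    exact subset_union_right

lemma bddAbove_isAftPair (C : Finset E) :
    BddAbove {x | ∃ f f', N.IsAftPair A1 A2 B f f' ∧ x = ∑ e ∈ C, f e} := by
  refine ⟨∑ e, N.cap e, ?_⟩
  rintro _ ⟨f, f', ⟨hf0, hf'0, hg, -⟩, rfl⟩
  calc ∑ e ∈ C, f e ≤ ∑ e ∈ C, N.cap e :=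
        sum_le_sum fun e _ => (le_add_of_nonneg_right (hf'0 e)).trans ((feasible_iff.1 hg).2.1 e)
    _ ≤ ∑ e, N.cap e := sum_le_sum_of_subset_of_nonneg (subset_univ _) fun e _ _ => N.cap_nonneg e

/-- `f + f'` carries at most `maxFromTo A2 B` through `A2`, which `f'` alone already does,
so `f` enters only through `A1`. -/
lemma IsAftPair.sum_add_eq (hA1 : A1 ⊆ N.Ein) (hA2 : A2 ⊆ N.Ein) (hdisj : Disjoint A1 A2)
    (hB : B ⊆ N.Eout) (hP : N.IsAftPair A1 A2 B f f') :
    ∑ e ∈ A1, (f e + f' e) = ∑ e ∈ B, f e := by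
  obtain ⟨hf0, -, hg, hA2M, hBM, hZ⟩ := hP
  have hflow : ∑ e ∈ A1 ∪ A2, (f + f') e = ∑ e ∈ B, (f + f') e :=
    sum_eq_sum_of_eq_zero (union_subset hA1 hA2) hB (feasible_iff.1 hg).2.2 hZ
  have hA2g : ∑ e ∈ A2, (f + f') e = N.maxFromTo A2 B :=
    le_antisymm (sum_le_maxFromTo hA2 hg fun e he => hZ e (mem_union_right _ he))
      (hA2M ▸ sum_le_sum fun e _ => le_add_of_nonneg_left (hf0 e))
  simp only [Pi.add_apply, sum_union hdisj, sum_add_distrib] at hflow hA2g ⊢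
  linarith

lemma IsAftPair.exists_sum_eq (hA1 : A1 ⊆ N.Ein) (hA2 : A2 ⊆ N.Ein) (hdisj : Disjoint A1 A2)
    (hB : B ⊆ N.Eout) (hP : N.IsAftPair A1 A2 B f f') :
    ∃ h h', N.IsAftPair A1 A2 B h h' ∧ ∑ e ∈ A1, h e = ∑ e ∈ B, f e := by
  obtain ⟨hf0, hf'0, hg, hA2M, hBM, hZ⟩ := hP
  set h := f + (A1 : Set E).indicator f'
  set h' := (A1 : Set E)ᶜ.indicator f'
  have hsum : h + h' = f + f' := by rw [add_assoc, Set.indicator_self_add_compl]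
  have hh' : ∀ C : Finset E, Disjoint A1 C → ∑ e ∈ C, h' e = ∑ e ∈ C, f' e := fun C hC =>
    sum_congr rfl fun e he => Set.indicator_of_mem (show e ∈ (A1 : Set E)ᶜ from disjoint_right.1 hC he) _
  have hA1B : Disjoint A1 B := disjoint_of_subset_left hA1 (disjoint_of_subset_right hB N.disj_in_out)
  refine ⟨h, h', ⟨fun e => add_nonneg (hf0 e) (Set.indicator_nonneg (fun e _ => hf'0 e) e),
    Set.indicator_nonneg (fun e _ => hf'0 e), hsum ▸ hg, (hh' A2 hdisj).trans hA2M,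
    (hh' B hA1B).trans hBM, fun e he => (congrFun hsum e).trans (hZ e he)⟩, ?_⟩
  rw [← IsAftPair.sum_add_eq hA1 hA2 hdisj hB ⟨hf0, hf'0, hg, hA2M, hBM, hZ⟩]
  exact sum_congr rfl fun e he => by simp [h, Set.indicator_of_mem (mem_coe.2 he)]

end IsAftPair

/-- the two suprema defining `maxFromToAft N (A1,B | A2,B)` agree:
the sup of `f(A1)` equals the sup of `f(B)` over all pairs `(f, f')` of nonnegative
functions with `f + f'` feasible, `f'(A2) = f'(B) = maxFromTo N A2 B`, and `f + f'`
vanishing on `(Ein \ (A1 ∪ A2)) ∪ (Eout \ B)`. -/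
theorem stmt3 (N : FlowNetwork V E) (A1 A2 B : Finset E)
    (hA1 : A1 ⊆ N.Ein) (hA2 : A2 ⊆ N.Ein) (hdisj : Disjoint A1 A2)
    (hB : B ⊆ N.Eout) :
    sSup {x : ℝ | ∃ f f' : E → ℝ, (∀ e, 0 ≤ f e) ∧ (∀ e, 0 ≤ f' e) ∧
        N.Feasible (f + f') ∧
        ∑ e ∈ A2, f' e = N.maxFromTo A2 B ∧ ∑ e ∈ B, f' e = N.maxFromTo A2 B ∧
        (∀ e ∈ (N.Ein \ (A1 ∪ A2)) ∪ (N.Eout \ B), f e + f' e = 0) ∧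
        x = ∑ e ∈ A1, f e} =
    sSup {x : ℝ | ∃ f f' : E → ℝ, (∀ e, 0 ≤ f e) ∧ (∀ e, 0 ≤ f' e) ∧
        N.Feasible (f + f') ∧
        ∑ e ∈ A2, f' e = N.maxFromTo A2 B ∧ ∑ e ∈ B, f' e = N.maxFromTo A2 B ∧
        (∀ e ∈ (N.Ein \ (A1 ∪ A2)) ∪ (N.Eout \ B), f e + f' e = 0) ∧
        x = ∑ e ∈ B, f e} := by
  suffices sSup {x | ∃ f f', N.IsAftPair A1 A2 B f f' ∧ x = ∑ e ∈ A1, f e} =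
      sSup {x | ∃ f f', N.IsAftPair A1 A2 B f f' ∧ x = ∑ e ∈ B, f e} by
    simpa only [IsAftPair, and_assoc] using this
  obtain ⟨f₀, hf₀⟩ := exists_isAftPair_zero (N := N) (A1 := A1) hA2 hB
  apply le_antisymm
  · refine csSup_le ⟨0, 0, f₀, hf₀, by simp⟩ ?_
    rintro _ ⟨f, f', hP, rfl⟩
    calc ∑ e ∈ A1, f e ≤ ∑ e ∈ A1, (f e + f' e) :=
          sum_le_sum fun e _ => le_add_of_nonneg_right (hP.2.1 e)
      _ = ∑ e ∈ B, f e := hP.sum_add_eq hA1 hA2 hdisj hB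
      _ ≤ _ := le_csSup (bddAbove_isAftPair B) ⟨f, f', hP, rfl⟩
  · refine csSup_le ⟨0, 0, f₀, hf₀, by simp⟩ ?_
    rintro _ ⟨f, f', hP, rfl⟩
    obtain ⟨h, h', hP', hsum⟩ := hP.exists_sum_eq hA1 hA2 hdisj hB
    exact le_csSup (bddAbove_isAftPair A1) ⟨h, h', hP', hsum.symm⟩

end FlowNetwork
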